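/- For every integer N ≥ 2 and every x in the support [0, N/(N+1)] of f_*, the indifference equation (1-x) · U_*(x)^{N-1} + (x/N) · V_*^{N-1} = 1/N holds, i.e. the expected winning probability of a player choosing any x in the support, against N-1 opponents playing f_*, equals 1/N. -/

import Mathlib

/-!
Put `q(t) = (N - t)/(1 - t)` and `c = 1/(N - 1)`. On its support the density is
`f_*(t) = N^(-2c) q(t)^(c-1) / (1 - t)^3`, and since `q' = (N - 1)/(1 - t)^2`, the integrand
`(1 - t) f_*(t)` is the derivative of `N^(-2c) q^c`, while `t f_*(t)` is the derivative of
`N^(-2c) q^c ((N + 1)t - N)/(N(1 - t))`, which vanishes at the end `N/(N + 1)` of the support.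
Hence `V_* = N^(-c)` and `U_*(x) = (q(x)/N^2)^c`, so `U_*^(N-1) = q/N^2` and `V_*^(N-1) = 1/N`,
and the indifference equation reduces to `(N - x)/N^2 + x/N^2 = 1/N`.
-/

open Real MeasureTheory

/-- The Nash-equilibrium density of the `N`-player elimination game. -/
noncomputable def fstar (N : ℕ) (x : ℝ) : ℝ :=
  if x ≤ (N:ℝ)/((N:ℝ)+1) then
    (N:ℝ) ^ (-(2:ℝ)/((N:ℝ)-1)) /
      ((1-x) ^ ((3:ℝ) - ((N:ℝ)-2)/((N:ℝ)-1)) * ((N:ℝ)-x) ^ (((N:ℝ)-2)/((N:ℝ)-1)))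
  else 0

/-- `U_*(x) = ∫_0^x (1-s) f_*(s) ds + ∫_0^1 s f_*(s) ds`. -/
noncomputable def Ustar (N : ℕ) (x : ℝ) : ℝ :=
  (∫ s in (0:ℝ)..x, (1-s) * fstar N s) + ∫ s in (0:ℝ)..1, s * fstar N s

/-- `V_* = ∫_0^1 s f_*(s) ds`. -/
noncomputable def Vstar (N : ℕ) : ℝ := ∫ s in (0:ℝ)..1, s * fstar N s

open intervalIntegral

theorem div_add_one_lt_one {n : ℝ} (hn : 0 ≤ n) : n / (n + 1) < 1 :=
  (div_lt_one (by linarith)).2 (by linarith)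

theorem rpow_inv_sub_one_pow {N : ℕ} (hN : 2 ≤ N) {y : ℝ} (hy : 0 ≤ y) :
    (y ^ ((N:ℝ) - 1)⁻¹) ^ (N - 1) = y := by
  have h := rpow_inv_natCast_pow hy (n := N - 1) (by omega)
  rwa [Nat.cast_sub (by omega), Nat.cast_one] at h

namespace EliminationGame

noncomputable def density (n c t : ℝ) : ℝ := ((n - t) / (1 - t)) ^ (c - 1) / (1 - t) ^ 3

variable {n c t : ℝ}

theorem hasDerivAt_ratio (ht : t ≠ 1) :
    HasDerivAt (fun t => (n - t) / (1 - t)) ((n - 1) / (1 - t) ^ 2) t :=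
  (((hasDerivAt_id t).const_sub n).div ((hasDerivAt_id t).const_sub 1)
    (sub_ne_zero.2 ht.symm)).congr_deriv (by simp only [id]; ring)

theorem hasDerivAt_ratio_rpow (hc : c * (n - 1) = 1) (ht : t < 1) (htn : t < n) :
    HasDerivAt (fun t => ((n - t) / (1 - t)) ^ c) ((1 - t) * density n c t) t := by
  have hq : (n - t) / (1 - t) ≠ 0 := div_ne_zero (by linarith) (by linarith)
  refine ((hasDerivAt_ratio ht.ne).rpow_const (Or.inl hq)).congr_deriv ?_
  have h1 : 1 - t ≠ 0 := by linarith
  unfold density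
  field_simp
  linear_combination ((n - t) / (1 - t)) ^ (c - 1) * hc

theorem hasDerivAt_ratio_rpow_mul (hc : c * (n - 1) = 1) (hn : n ≠ 0) (ht : t < 1) (htn : t < n) :
    HasDerivAt (fun t => ((n - t) / (1 - t)) ^ c * (((n + 1) * t - n) / (n * (1 - t))))
      (t * density n c t) t := by
  have h1 : 1 - t ≠ 0 := by linarith
  have h2 : n - t ≠ 0 := by linarith
  have hq : (n - t) / (1 - t) ≠ 0 := div_ne_zero h2 h1
  have hlin : HasDerivAt (fun t => ((n + 1) * t - n) / (n * (1 - t))) (1 / (n * (1 - t) ^ 2)) t :=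
    ((((hasDerivAt_id t).const_mul (n + 1)).sub_const n).div
      (((hasDerivAt_id t).const_sub 1).const_mul n) (mul_ne_zero hn h1)).congr_deriv
      (by simp only [id]; field_simp; ring)
  refine ((hasDerivAt_ratio_rpow hc ht htn).mul hlin).congr_deriv ?_
  unfold density
  rw [rpow_sub_one hq]
  field_simp
  ring

variable {x : ℝ}

theorem continuousOn_density (hx : x < 1) (hxn : x < n) :
    ContinuousOn (density n c) (Set.Iic x) := by
  have h1 : ∀ t ∈ Set.Iic x, 1 - t ≠ 0 := fun t ht => by
    rw [Set.mem_Iic] at ht; linarith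
  have hq : ∀ t ∈ Set.Iic x, (n - t) / (1 - t) ≠ 0 := fun t ht =>
    div_ne_zero (by rw [Set.mem_Iic] at ht; linarith) (h1 t ht)
  refine ContinuousOn.div (ContinuousOn.rpow_const ?_ fun t ht => Or.inl (hq t ht)) (by fun_prop)
    fun t ht => pow_ne_zero 3 (h1 t ht)
  exact (continuousOn_const.sub continuousOn_id).div (continuousOn_const.sub continuousOn_id) h1

theorem integral_mul_density_eq_sub {φ F : ℝ → ℝ} (hφ : Continuous φ) (hx0 : 0 ≤ x)
    (hx : x < 1) (hxn : x < n) (hF : ∀ t ≤ x, HasDerivAt F (φ t * density n c t) t) :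
    ∫ s in 0..x, φ s * density n c s = F x - F 0 := by
  have hsub : Set.uIcc 0 x ⊆ Set.Iic x := Set.uIcc_of_le hx0 ▸ Set.Icc_subset_Iic_self
  exact integral_eq_sub_of_hasDerivAt (fun t ht => hF t (hsub ht))
    ((hφ.continuousOn.mul (continuousOn_density hx hxn)).mono hsub).intervalIntegrable

theorem integral_one_sub_mul_density (hc : c * (n - 1) = 1) (hx0 : 0 ≤ x) (hx : x < 1)
    (hxn : x < n) :
    ∫ s in 0..x, (1 - s) * density n c s = ((n - x) / (1 - x)) ^ c - n ^ c := by
  rw [integral_mul_density_eq_sub (by fun_prop) hx0 hx hxn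
    fun t ht => hasDerivAt_ratio_rpow hc (by linarith) (by linarith)]
  simp

theorem integral_mul_density (hc : c * (n - 1) = 1) (hn : 1 < n) :
    ∫ s in 0..n / (n + 1), s * density n c s = n ^ c := by
  have ha1 : n / (n + 1) < 1 := div_add_one_lt_one (by linarith)
  rw [integral_mul_density_eq_sub (φ := fun s => s) continuous_id (by positivity) ha1 (by linarith)
    fun t ht => hasDerivAt_ratio_rpow_mul hc (by positivity) (by linarith) (by linarith)]
  have hzero : (n + 1) * (n / (n + 1)) - n = 0 := by field_simp; ring
  simp only [hzero, zero_div, mul_zero, sub_zero, div_one, zero_sub, mul_one]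
  field_simp

end EliminationGame

open EliminationGame

section
variable {N : ℕ}

theorem fstar_eq_mul_density (hN : 2 ≤ N) {t : ℝ} (ht : t ≤ (N:ℝ)/((N:ℝ)+1)) :
    fstar N t = ((N:ℝ) ^ 2)⁻¹ ^ ((N:ℝ) - 1)⁻¹ * density N ((N:ℝ) - 1)⁻¹ t := by
  have hN' : (2:ℝ) ≤ N := by exact_mod_cast hN
  have h1 : 0 < 1 - t := by linarith [ht.trans_lt (div_add_one_lt_one (Nat.cast_nonneg N))]
  have h2 : 0 < (N:ℝ) - t := by linarith
  have hconst : (N:ℝ) ^ (-(2:ℝ)/((N:ℝ)-1)) = ((N:ℝ) ^ 2)⁻¹ ^ ((N:ℝ) - 1)⁻¹ := by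
    rw [inv_rpow (by positivity), ← rpow_natCast_mul (by positivity),
      ← rpow_neg (by positivity)]
    push_cast; ring_nf
  have hexp : ((N:ℝ) - 1)⁻¹ - 1 = -(((N:ℝ)-2)/((N:ℝ)-1)) := by
    field_simp [show (N:ℝ) - 1 ≠ 0 by linarith]; ring
  rw [fstar, if_pos ht, density, hconst, hexp, rpow_neg (by positivity), div_rpow h2.le h1.le,
    rpow_sub h1, rpow_ofNat]
  field_simp

theorem fstar_eq_zero {t : ℝ} (ht : (N:ℝ)/((N:ℝ)+1) < t) : fstar N t = 0 :=
  if_neg ht.not_ge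

theorem integral_mul_fstar (hN : 2 ≤ N) :
    ∫ s in (0:ℝ)..1, s * fstar N s =
      ((N:ℝ) ^ 2)⁻¹ ^ ((N:ℝ) - 1)⁻¹ * (N:ℝ) ^ ((N:ℝ) - 1)⁻¹ := by
  set a := (N:ℝ)/((N:ℝ)+1)
  set c := ((N:ℝ) - 1)⁻¹
  have hN' : (2:ℝ) ≤ N := by exact_mod_cast hN
  have ha0 : 0 ≤ a := by positivity
  have ha1 : a < 1 := div_add_one_lt_one (Nat.cast_nonneg N)
  have hzero : Set.EqOn (fun s => s * fstar N s) 0 (Set.uIoc a 1) := fun s hs => by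
    simp [fstar_eq_zero (Set.uIoc_of_le ha1.le ▸ hs).1]
  have hsupp : Set.EqOn (fun s => s * fstar N s)
      (fun s => ((N:ℝ) ^ 2)⁻¹ ^ c * (s * density N c s)) (Set.uIcc 0 a) := fun s hs => by
    simp only [fstar_eq_mul_density hN (Set.uIcc_of_le ha0 ▸ hs).2]; ring
  have hint : IntervalIntegrable (fun s => s * fstar N s) volume 0 a :=
    (ContinuousOn.congr (continuousOn_const.mul (continuousOn_id.mul
      ((continuousOn_density ha1 (by linarith)).mono
        (Set.uIcc_of_le ha0 ▸ Set.Icc_subset_Iic_self)))) hsupp).intervalIntegrable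
  rw [← integral_add_adjacent_intervals hint
      ((intervalIntegrable_congr hzero).2 intervalIntegrable_const),
    integral_zero_ae (Filter.Eventually.of_forall hzero), add_zero, integral_congr hsupp,
    intervalIntegral.integral_const_mul,
    integral_mul_density (inv_mul_cancel₀ (by linarith)) (by linarith)]

theorem Vstar_eq (hN : 2 ≤ N) : Vstar N = (N:ℝ)⁻¹ ^ ((N:ℝ) - 1)⁻¹ := by
  have hN' : (2:ℝ) ≤ N := by exact_mod_cast hN
  rw [Vstar, integral_mul_fstar hN, ← mul_rpow (by positivity) (by positivity)]
  congr 1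
  field_simp

theorem Ustar_eq (hN : 2 ≤ N) {x : ℝ} (hx : x ∈ Set.Icc (0:ℝ) ((N:ℝ)/((N:ℝ)+1))) :
    Ustar N x = (((N:ℝ) ^ 2)⁻¹ * (((N:ℝ) - x) / (1 - x))) ^ ((N:ℝ) - 1)⁻¹ := by
  have hN' : (2:ℝ) ≤ N := by exact_mod_cast hN
  have h1 : x < 1 := hx.2.trans_lt (div_add_one_lt_one (Nat.cast_nonneg N))
  set c := ((N:ℝ) - 1)⁻¹
  have hsupp : Set.EqOn (fun s => (1 - s) * fstar N s)
      (fun s => ((N:ℝ) ^ 2)⁻¹ ^ c * ((1 - s) * density N c s)) (Set.uIcc 0 x) := fun s hs => by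
    simp only [fstar_eq_mul_density hN ((Set.uIcc_of_le hx.1 ▸ hs).2.trans hx.2)]; ring
  rw [Ustar, integral_mul_fstar hN, integral_congr hsupp, intervalIntegral.integral_const_mul,
    integral_one_sub_mul_density (inv_mul_cancel₀ (by linarith)) hx.1 h1 (by linarith),
    mul_rpow (by positivity) (div_nonneg (by linarith) (by linarith))]
  ring

end

/-- the indifference equation: for `N ≥ 2` and every `x` in the
support `[0, N/(N+1)]` of `f_*`, the expected winning probability
`(1-x) U_*(x)^{N-1} + (x/N) V_*^{N-1}` equals `1/N`. -/
theorem indifference_on_support (N : ℕ) (hN : 2 ≤ N)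
    (x : ℝ) (hx : x ∈ Set.Icc (0:ℝ) ((N:ℝ)/((N:ℝ)+1))) :
    (1-x) * (Ustar N x) ^ (N-1) + (x/(N:ℝ)) * (Vstar N) ^ (N-1) = 1/(N:ℝ) := by
  have hN' : (2:ℝ) ≤ N := by exact_mod_cast hN
  have h1 : 0 < 1 - x := by linarith [hx.2.trans_lt (div_add_one_lt_one (Nat.cast_nonneg N))]
  have h2 : 0 < (N:ℝ) - x := by linarith
  rw [Ustar_eq hN hx, Vstar_eq hN, rpow_inv_sub_one_pow hN (by positivity),
    rpow_inv_sub_one_pow hN (by positivity)]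
  field_simp
  ring
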